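/- Let ρ > 0, α ≥ 0 and C ≥ 0, and let f : [-ρ, ρ] × ℝ → ℝ be a positive function, twice continuously differentiable, 2π-periodic in its second variable, satisfying for all (σ, θ) ∈ [-ρ, ρ] × ℝ the inequality ∂²f/∂σ²(σ, θ) ≤ (α/2)·f(σ, θ), and at the two ends the bounds |∂f/∂σ(-ρ, θ)| ≤ C·f(-ρ, θ) and |∂f/∂σ(ρ, θ)| ≤ C·f(ρ, θ). Define A = ∫₀^{2π} ∫_{-ρ}^{ρ} f(σ, θ) dσ dθ and L = min{∫₀^{2π} f(-ρ, θ) dθ, ∫₀^{2π} f(ρ, θ) dθ}. Then 2ρ·L·exp(-2ρ(αρ + C)) ≤ A ≤ 2ρ·L·exp(2ρ(αρ + C)). -/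

import Mathlib

/-!
Fix `θ` and write `g = f(·, θ)`. The Riccati inequality `(g'/g)' = g''/g - (g'/g)² ≤ α/2`
makes `g'/g - ασ/2` nonincreasing, so the boundary bounds `|g'/g| ≤ C` at `σ = ±ρ` propagate
to `|(log g)'| ≤ αρ + C` on `[-ρ, ρ]`. Hence `g(σ)` and `g(±ρ)` differ by a factor at most
`exp (2ρ(αρ + C))`; integrating over `σ ∈ [-ρ, ρ]` and `θ ∈ [0, 2π]` gives both bounds.
-/

open Set intervalIntegral
open MeasureTheory (volume)

section LogDerivBound

variable {a b k C : ℝ} {g g' g'' : ℝ → ℝ}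

-- `(g'/g)' = g''/g - (g'/g)² ≤ k`
theorem antitoneOn_div_sub_mul_of_le_mul
    (hpos : ∀ x ∈ Icc a b, 0 < g x)
    (hg : ∀ x ∈ Icc a b, HasDerivWithinAt g (g' x) (Icc a b) x)
    (hg' : ∀ x ∈ Icc a b, HasDerivWithinAt g' (g'' x) (Icc a b) x)
    (hle : ∀ x ∈ Icc a b, g'' x ≤ k * g x) :
    AntitoneOn (fun x => g' x / g x - k * x) (Icc a b) := by
  have hderiv : ∀ x ∈ Icc a b, HasDerivWithinAt (fun x => g' x / g x - k * x)
      ((g'' x * g x - g' x * g' x) / g x ^ 2 - k) (Icc a b) x := fun x hx => by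
    have h := ((hg' x hx).div (hg x hx) (hpos x hx).ne').sub
      ((hasDerivAt_id x).const_mul k).hasDerivWithinAt
    rwa [mul_one] at h
  refine antitoneOn_of_hasDerivWithinAt_nonpos (convex_Icc a b)
    (fun x hx => (hderiv x hx).continuousWithinAt)
    (fun x hx => (hderiv x (interior_subset hx)).mono interior_subset) fun x hx => ?_
  have hx := interior_subset hx
  have hgx := hpos x hx
  rw [sub_nonpos, div_le_iff₀ (by positivity)]
  nlinarith [mul_le_mul_of_nonneg_right (hle x hx) hgx.le, sq_nonneg (g' x)]

theorem abs_div_le_of_le_mul (hk : 0 ≤ k)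
    (hpos : ∀ x ∈ Icc a b, 0 < g x)
    (hg : ∀ x ∈ Icc a b, HasDerivWithinAt g (g' x) (Icc a b) x)
    (hg' : ∀ x ∈ Icc a b, HasDerivWithinAt g' (g'' x) (Icc a b) x)
    (hle : ∀ x ∈ Icc a b, g'' x ≤ k * g x)
    (ha : |g' a| ≤ C * g a) (hb : |g' b| ≤ C * g b) :
    ∀ x ∈ Icc a b, |g' x / g x| ≤ C + k * (b - a) := by
  intro x hx
  have hab : a ≤ b := hx.1.trans hx.2
  have hanti := antitoneOn_div_sub_mul_of_le_mul hpos hg hg' hle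
  have hleft := hanti (left_mem_Icc.2 hab) hx hx.1
  have hright := hanti hx (right_mem_Icc.2 hab) hx.2
  have hua : g' a / g a ≤ C := by
    rw [div_le_iff₀ (hpos a (left_mem_Icc.2 hab))]; exact (abs_le.1 ha).2
  have hub : -C ≤ g' b / g b := by
    rw [le_div_iff₀ (hpos b (right_mem_Icc.2 hab))]; linarith [(abs_le.1 hb).1]
  simp only at hleft hright
  rw [abs_le]
  constructor <;> nlinarith [hx.1, hx.2]

theorem le_mul_exp_of_abs_div_le {M x y : ℝ}
    (hpos : ∀ x ∈ Icc a b, 0 < g x)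
    (hg : ∀ x ∈ Icc a b, HasDerivWithinAt g (g' x) (Icc a b) x)
    (hM : ∀ x ∈ Icc a b, |g' x / g x| ≤ M) (hx : x ∈ Icc a b) (hy : y ∈ Icc a b) :
    g x ≤ g y * Real.exp (M * |x - y|) := by
  have hlog : ∀ z ∈ Icc a b,
      HasDerivWithinAt (fun z => Real.log (g z)) (g' z / g z) (Icc a b) z :=
    fun z hz => (hg z hz).log (hpos z hz).ne'
  have := Convex.norm_image_sub_le_of_norm_hasDerivWithin_le hlog hM (convex_Icc a b) hy hx
  rw [Real.norm_eq_abs, Real.norm_eq_abs, abs_le] at this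
  calc g x = Real.exp (Real.log (g x)) := (Real.exp_log (hpos x hx)).symm
    _ ≤ Real.exp (Real.log (g y) + M * |x - y|) := Real.exp_le_exp.2 (by linarith [this.2])
    _ = g y * Real.exp (M * |x - y|) := by rw [Real.exp_add, Real.exp_log (hpos y hy)]

theorem le_mul_exp_of_le_mul (hk : 0 ≤ k)
    (hpos : ∀ x ∈ Icc a b, 0 < g x)
    (hg : ∀ x ∈ Icc a b, HasDerivWithinAt g (g' x) (Icc a b) x)
    (hg' : ∀ x ∈ Icc a b, HasDerivWithinAt g' (g'' x) (Icc a b) x)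
    (hle : ∀ x ∈ Icc a b, g'' x ≤ k * g x)
    (ha : |g' a| ≤ C * g a) (hb : |g' b| ≤ C * g b) {x y : ℝ}
    (hx : x ∈ Icc a b) (hy : y ∈ Icc a b) :
    g x ≤ g y * Real.exp ((C + k * (b - a)) * (b - a)) := by
  have hM := abs_div_le_of_le_mul hk hpos hg hg' hle ha hb
  have hM0 : 0 ≤ C + k * (b - a) := (abs_nonneg _).trans (hM x hx)
  calc g x ≤ g y * Real.exp ((C + k * (b - a)) * |x - y|) :=
        le_mul_exp_of_abs_div_le hpos hg hM hx hy
    _ ≤ g y * Real.exp ((C + k * (b - a)) * (b - a)) := by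
      have : |x - y| ≤ b - a := abs_sub_le_of_le_of_le hx.1 hx.2 hy.1 hy.2
      gcongr
      exact (hpos y hy).le

end LogDerivBound

section Integration

variable {a b c d : ℝ} {f : ℝ → ℝ → ℝ} {g : ℝ → ℝ}

theorem continuous_intervalIntegral_of_continuousOn (hab : a ≤ b)
    (hf : ContinuousOn (fun p : ℝ × ℝ => f p.1 p.2) (Icc a b ×ˢ univ)) :
    Continuous fun θ => ∫ σ in a..b, f σ θ := by
  -- extend `f` continuously to all of `ℝ × ℝ` by clamping `σ` to `[a, b]`
  have hext : Continuous (Function.uncurry fun θ σ => f (projIcc a b hab σ) θ) :=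
    hf.comp_continuous (f := fun p : ℝ × ℝ => ((projIcc a b hab p.2 : ℝ), p.1)) (by fun_prop)
      fun p => ⟨Subtype.property _, mem_univ _⟩
  refine (continuous_parametric_intervalIntegral_of_continuous' (μ := volume) hext a b).congr
    fun θ => ?_
  refine integral_congr fun σ hσ => ?_
  rw [uIcc_of_le hab] at hσ
  simp [projIcc_of_mem hab hσ]

theorem intervalIntegrable_of_continuousOn (hab : a ≤ b)
    (hf : ContinuousOn (fun p : ℝ × ℝ => f p.1 p.2) (Icc a b ×ˢ univ)) (θ : ℝ) :
    IntervalIntegrable (fun σ => f σ θ) volume a b :=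
  ContinuousOn.intervalIntegrable_of_Icc hab <|
    hf.comp (continuous_id.prodMk continuous_const).continuousOn fun _ hσ => ⟨hσ, mem_univ θ⟩

theorem continuous_apply_of_continuousOn {σ₀ : ℝ} (hσ₀ : σ₀ ∈ Icc a b)
    (hf : ContinuousOn (fun p : ℝ × ℝ => f p.1 p.2) (Icc a b ×ˢ univ)) :
    Continuous (f σ₀) :=
  hf.comp_continuous (f := fun θ => (σ₀, θ)) (by fun_prop) fun θ => ⟨hσ₀, mem_univ θ⟩

theorem sub_mul_integral_le_integral_integral (hab : a ≤ b) (hcd : c ≤ d)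
    (hf : ContinuousOn (fun p : ℝ × ℝ => f p.1 p.2) (Icc a b ×ˢ univ))
    (hg : IntervalIntegrable g volume c d)
    (hle : ∀ θ ∈ Icc c d, ∀ σ ∈ Icc a b, g θ ≤ f σ θ) :
    (b - a) * ∫ θ in c..d, g θ ≤ ∫ θ in c..d, ∫ σ in a..b, f σ θ := by
  rw [← integral_const_mul]
  refine integral_mono_on hcd (hg.const_mul _)
    ((continuous_intervalIntegral_of_continuousOn hab hf).intervalIntegrable c d) fun θ hθ => ?_
  simpa using integral_mono_on hab intervalIntegrable_const
    (intervalIntegrable_of_continuousOn hab hf θ) fun σ hσ => hle θ hθ σ hσ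

theorem integral_integral_le_sub_mul_integral (hab : a ≤ b) (hcd : c ≤ d)
    (hf : ContinuousOn (fun p : ℝ × ℝ => f p.1 p.2) (Icc a b ×ˢ univ))
    (hg : IntervalIntegrable g volume c d)
    (hle : ∀ θ ∈ Icc c d, ∀ σ ∈ Icc a b, f σ θ ≤ g θ) :
    ∫ θ in c..d, ∫ σ in a..b, f σ θ ≤ (b - a) * ∫ θ in c..d, g θ := by
  rw [← integral_const_mul]
  refine integral_mono_on hcd
    ((continuous_intervalIntegral_of_continuousOn hab hf).intervalIntegrable c d)
    (hg.const_mul _) fun θ hθ => ?_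
  simpa using integral_mono_on hab (intervalIntegrable_of_continuousOn hab hf θ)
    intervalIntegrable_const fun σ hσ => hle θ hθ σ hσ

end Integration

theorem stmt_3_general (ρ α C : ℝ) (hρ : 0 < ρ) (hα : 0 ≤ α)
    (f fσ fσσ : ℝ → ℝ → ℝ)
    (hpos : ∀ σ ∈ Icc (-ρ) ρ, ∀ θ : ℝ, 0 < f σ θ)
    (hder : ∀ θ : ℝ, ∀ σ ∈ Icc (-ρ) ρ,
      HasDerivWithinAt (fun x => f x θ) (fσ σ θ) (Icc (-ρ) ρ) σ)
    (hder' : ∀ θ : ℝ, ∀ σ ∈ Icc (-ρ) ρ,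
      HasDerivWithinAt (fun x => fσ x θ) (fσσ σ θ) (Icc (-ρ) ρ) σ)
    (hcont : ContinuousOn (fun p : ℝ × ℝ => f p.1 p.2) (Icc (-ρ) ρ ×ˢ univ))
    (hineq : ∀ σ ∈ Icc (-ρ) ρ, ∀ θ : ℝ, fσσ σ θ ≤ (α / 2) * f σ θ)
    (hbl : ∀ θ : ℝ, |fσ (-ρ) θ| ≤ C * f (-ρ) θ)
    (hbr : ∀ θ : ℝ, |fσ ρ θ| ≤ C * f ρ θ)
    (A L : ℝ)
    (hA : A = ∫ θ in (0:ℝ)..(2 * Real.pi), ∫ σ in (-ρ)..ρ, f σ θ)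
    (hLdef : L = min (∫ θ in (0:ℝ)..(2 * Real.pi), f (-ρ) θ)
                     (∫ θ in (0:ℝ)..(2 * Real.pi), f ρ θ)) :
    2 * ρ * L * Real.exp (-(2 * ρ * (α * ρ + C))) ≤ A ∧
    A ≤ 2 * ρ * L * Real.exp (2 * ρ * (α * ρ + C)) := by
  set K := 2 * ρ * (α * ρ + C)
  have hρ' : -ρ ≤ ρ := by linarith
  have hleft : -ρ ∈ Icc (-ρ) ρ := left_mem_Icc.2 hρ'
  have h2π : (0 : ℝ) ≤ 2 * Real.pi := by positivity
  have hcomp : ∀ θ, ∀ σ ∈ Icc (-ρ) ρ, ∀ b ∈ Icc (-ρ) ρ,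
      f σ θ ≤ f b θ * Real.exp K :=
    fun θ σ hσ b hb => by
      convert le_mul_exp_of_le_mul (div_nonneg hα zero_le_two) (fun x hx => hpos x hx θ)
        (hder θ) (hder' θ) (fun x hx => hineq x hx θ) (hbl θ) (hbr θ) hσ hb using 3
      ring
  have hint : ∀ b ∈ Icc (-ρ) ρ, ∀ c : ℝ,
      IntervalIntegrable (fun θ => f b θ * c) volume 0 (2 * Real.pi) := fun b hb c =>
    ((continuous_apply_of_continuousOn hb hcont).mul continuous_const).intervalIntegrable _ _
  obtain ⟨b, hb, hLb⟩ :
      ∃ b ∈ Icc (-ρ) ρ, L = ∫ θ in (0:ℝ)..(2 * Real.pi), f b θ := by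
    rcases min_choice (∫ θ in (0:ℝ)..(2 * Real.pi), f (-ρ) θ)
      (∫ θ in (0:ℝ)..(2 * Real.pi), f ρ θ) with h | h
    exacts [⟨-ρ, hleft, hLdef.trans h⟩, ⟨ρ, right_mem_Icc.2 hρ', hLdef.trans h⟩]
  subst hA
  constructor
  · calc 2 * ρ * L * Real.exp (-K)
        ≤ (ρ - -ρ) * ∫ θ in (0:ℝ)..(2 * Real.pi), f (-ρ) θ * Real.exp (-K) := by
          rw [integral_mul_const, hLdef, sub_neg_eq_add, ← two_mul, mul_assoc]
          gcongr
          exact min_le_left _ _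
      _ ≤ _ := sub_mul_integral_le_integral_integral hρ' h2π hcont (hint _ hleft _)
          fun θ _ σ hσ => by
            rw [Real.exp_neg, ← div_eq_mul_inv, div_le_iff₀ (Real.exp_pos K)]
            exact hcomp θ _ hleft σ hσ
  · calc _ ≤ (ρ - -ρ) * ∫ θ in (0:ℝ)..(2 * Real.pi), f b θ * Real.exp K :=
          integral_integral_le_sub_mul_integral hρ' h2π hcont (hint b hb _)
            fun θ _ σ hσ => hcomp θ σ hσ b hb
      _ = 2 * ρ * L * Real.exp K := by rw [integral_mul_const, hLb]; ring

/-- For a positive, twice continuously differentiable function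
`f(σ, θ)` on `[-ρ, ρ] × ℝ`, `2π`-periodic in `θ`, with `∂²f/∂σ² ≤ (α/2) f` and
`|∂f/∂σ| ≤ C f` at `σ = ±ρ`, the area `A = ∫₀^{2π} ∫_{-ρ}^{ρ} f dσ dθ` and the
minimal boundary length `L` satisfy `2ρ L e^{-2ρ(αρ+C)} ≤ A ≤ 2ρ L e^{2ρ(αρ+C)}`. -/
theorem stmt_3 (ρ α C : ℝ) (hρ : 0 < ρ) (hα : 0 ≤ α) (hC : 0 ≤ C)
    (f fσ fσσ : ℝ → ℝ → ℝ)
    (hpos : ∀ σ ∈ Icc (-ρ) ρ, ∀ θ : ℝ, 0 < f σ θ)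
    (hper : ∀ σ ∈ Icc (-ρ) ρ, ∀ θ : ℝ, f σ (θ + 2 * Real.pi) = f σ θ)
    (hder : ∀ θ : ℝ, ∀ σ ∈ Icc (-ρ) ρ,
      HasDerivWithinAt (fun x => f x θ) (fσ σ θ) (Icc (-ρ) ρ) σ)
    (hder' : ∀ θ : ℝ, ∀ σ ∈ Icc (-ρ) ρ,
      HasDerivWithinAt (fun x => fσ x θ) (fσσ σ θ) (Icc (-ρ) ρ) σ)
    (hcont : ContinuousOn (fun p : ℝ × ℝ => f p.1 p.2) (Icc (-ρ) ρ ×ˢ univ))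
    (hcont' : ContinuousOn (fun p : ℝ × ℝ => fσ p.1 p.2) (Icc (-ρ) ρ ×ˢ univ))
    (hcont'' : ContinuousOn (fun p : ℝ × ℝ => fσσ p.1 p.2) (Icc (-ρ) ρ ×ˢ univ))
    (hineq : ∀ σ ∈ Icc (-ρ) ρ, ∀ θ : ℝ, fσσ σ θ ≤ (α / 2) * f σ θ)
    (hbl : ∀ θ : ℝ, |fσ (-ρ) θ| ≤ C * f (-ρ) θ)
    (hbr : ∀ θ : ℝ, |fσ ρ θ| ≤ C * f ρ θ)
    (A L : ℝ)
    (hA : A = ∫ θ in (0:ℝ)..(2 * Real.pi), ∫ σ in (-ρ)..ρ, f σ θ)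
    (hLdef : L = min (∫ θ in (0:ℝ)..(2 * Real.pi), f (-ρ) θ)
                     (∫ θ in (0:ℝ)..(2 * Real.pi), f ρ θ)) :
    2 * ρ * L * Real.exp (-(2 * ρ * (α * ρ + C))) ≤ A ∧
    A ≤ 2 * ρ * L * Real.exp (2 * ρ * (α * ρ + C)) :=
  stmt_3_general ρ α C hρ hα f fσ fσσ hpos hder hder' hcont hineq hbl hbr A L hA hLdef
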